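/- Let I, J be finite types and let E1 : Matrix I I ℂ → Matrix I I ℂ and E2 : Matrix J J ℂ → Matrix J J ℂ be functions that map every positive semidefinite matrix to a positive semidefinite matrix of the same trace. Then for every expectation B on I × J the judgment qRHL(0, E1, E2, B) holds, where 0 is the zero matrix as preexpectation. [Rule ExFalso] -/

import Mathlib

open Matrix Kronecker ComplexOrder

noncomputable section

/-- Partial trace over the second factor: `tr₂(ρ) i i' = ∑ j, ρ (i,j) (i',j)`. -/
def trB {I J : Type*} [Fintype J] (ρ : Matrix (I × J) (I × J) ℂ) : Matrix I I ℂ :=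
  Matrix.of fun i i' => ∑ j, ρ (i, j) (i', j)

/-- Partial trace over the first factor: `tr₁(ρ) j j' = ∑ i, ρ (i,j) (i,j')`. -/
def trA {I J : Type*} [Fintype I] (ρ : Matrix (I × J) (I × J) ℂ) : Matrix J J ℂ :=
  Matrix.of fun j j' => ∑ i, ρ (i, j) (i, j')

/-- `ρ` is separable iff it is a finite sum of Kronecker products of
positive semidefinite matrices. -/
def Separable {I J : Type*} [Fintype I] [Fintype J]
    (ρ : Matrix (I × J) (I × J) ℂ) : Prop :=
  ∃ (n : ℕ) (σ : Fin n → Matrix I I ℂ) (τ : Fin n → Matrix J J ℂ),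
    (∀ k, (σ k).PosSemidef) ∧ (∀ k, (τ k).PosSemidef) ∧ ρ = ∑ k, σ k ⊗ₖ τ k

/-- The expectation-qRHL judgment `qRHL(A, E1, E2, B)`. -/
def qRHL {I J : Type*} [Fintype I] [Fintype J]
    (A : Matrix (I × J) (I × J) ℂ)
    (E1 : Matrix I I ℂ → Matrix I I ℂ) (E2 : Matrix J J ℂ → Matrix J J ℂ)
    (B : Matrix (I × J) (I × J) ℂ) : Prop :=
  ∀ ρ : Matrix (I × J) (I × J) ℂ, ρ.PosSemidef → Separable ρ →
    ∃ ρ' : Matrix (I × J) (I × J) ℂ, ρ'.PosSemidef ∧ Separable ρ' ∧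
      trB ρ' = E1 (trB ρ) ∧ trA ρ' = E2 (trA ρ) ∧
      (Matrix.trace (A * ρ)).re ≤ (Matrix.trace (B * ρ')).re

/-!
With zero pre-expectation the only obligation is to couple the output marginals
`E1 (tr₂ ρ)` and `E2 (tr₁ ρ)` by a separable state. Both are positive semidefinite with trace
`tr ρ`, so the normalized product `(tr ρ)⁻¹ • (E1 (tr₂ ρ) ⊗ E2 (tr₁ ρ))` does it, and its pairing
with the positive semidefinite `B` has nonnegative real part.
-/

namespace Matrix.PosSemidef

variable {𝕜 n : Type*} [RCLike 𝕜] [Fintype n]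

theorem trace_mul_nonneg {A B : Matrix n n 𝕜} (hA : A.PosSemidef) (hB : B.PosSemidef) :
    0 ≤ (A * B).trace := by
  classical
  open scoped MatrixOrder Matrix.Norms.L2Operator in
  obtain ⟨C, rfl⟩ := CStarAlgebra.nonneg_iff_eq_star_mul_self.mp hB.nonneg
  rw [star_eq_conjTranspose, ← Matrix.mul_assoc, trace_mul_cycle]
  exact (hA.mul_mul_conjTranspose_same C).trace_nonneg

/-- Holds also when `A.trace = 0`, since then `A = 0`. -/
theorem trace_mul_inv_trace_smul {A : Matrix n n 𝕜} (hA : A.PosSemidef) :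
    (A.trace * A.trace⁻¹) • A = A := by
  by_cases h : A.trace = 0
  · rw [hA.trace_eq_zero_iff.mp h, smul_zero]
  · rw [mul_inv_cancel₀ h, one_smul]

end Matrix.PosSemidef

section PartialTrace

variable {I J : Type*}

theorem trB_kronecker [Fintype J] (A : Matrix I I ℂ) (B : Matrix J J ℂ) :
    trB (A ⊗ₖ B) = B.trace • A := by
  ext i i'
  simp [trB, Matrix.trace, ← Finset.mul_sum, mul_comm]

theorem trA_kronecker [Fintype I] (A : Matrix I I ℂ) (B : Matrix J J ℂ) :
    trA (A ⊗ₖ B) = A.trace • B := by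
  ext j j'
  simp [trA, Matrix.trace, ← Finset.sum_mul]

theorem trB_sum [Fintype J] {ι : Type*} (s : Finset ι) (f : ι → Matrix (I × J) (I × J) ℂ) :
    trB (∑ k ∈ s, f k) = ∑ k ∈ s, trB (f k) := by
  ext i i'
  simp only [trB, Matrix.of_apply, Matrix.sum_apply]
  exact Finset.sum_comm

theorem trA_sum [Fintype I] {ι : Type*} (s : Finset ι) (f : ι → Matrix (I × J) (I × J) ℂ) :
    trA (∑ k ∈ s, f k) = ∑ k ∈ s, trA (f k) := by
  ext j j'
  simp only [trA, Matrix.of_apply, Matrix.sum_apply]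
  exact Finset.sum_comm

theorem trace_trB [Fintype I] [Fintype J] (ρ : Matrix (I × J) (I × J) ℂ) : (trB ρ).trace = ρ.trace := by
  simp [trB, Matrix.trace, Fintype.sum_prod_type]

theorem trace_trA [Fintype I] [Fintype J] (ρ : Matrix (I × J) (I × J) ℂ) : (trA ρ).trace = ρ.trace := by
  simp only [trA, Matrix.trace, Matrix.diag, Matrix.of_apply, Fintype.sum_prod_type]
  exact Finset.sum_comm

end PartialTrace

namespace Separable

variable {I J : Type*} [Fintype I] [Fintype J]

theorem kronecker {σ : Matrix I I ℂ} {τ : Matrix J J ℂ} (hσ : σ.PosSemidef)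
    (hτ : τ.PosSemidef) : Separable (σ ⊗ₖ τ) :=
  ⟨1, fun _ => σ, fun _ => τ, fun _ => hσ, fun _ => hτ, by rw [Fin.sum_univ_one]⟩

theorem posSemidef_trB {ρ : Matrix (I × J) (I × J) ℂ} (h : Separable ρ) :
    (trB ρ).PosSemidef := by
  obtain ⟨n, σ, τ, hσ, hτ, rfl⟩ := h
  rw [trB_sum]
  refine posSemidef_sum _ fun k _ => ?_
  rw [trB_kronecker]
  exact (hσ k).smul (hτ k).trace_nonneg

theorem posSemidef_trA {ρ : Matrix (I × J) (I × J) ℂ} (h : Separable ρ) :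
    (trA ρ).PosSemidef := by
  obtain ⟨n, σ, τ, hσ, hτ, rfl⟩ := h
  rw [trA_sum]
  refine posSemidef_sum _ fun k _ => ?_
  rw [trA_kronecker]
  exact (hτ k).smul (hσ k).trace_nonneg

end Separable

theorem exists_separable_of_trace_eq {I J : Type*} [Fintype I] [Fintype J]
    {X : Matrix I I ℂ} {Y : Matrix J J ℂ} (hX : X.PosSemidef) (hY : Y.PosSemidef)
    (h : X.trace = Y.trace) :
    ∃ ρ : Matrix (I × J) (I × J) ℂ, ρ.PosSemidef ∧ Separable ρ ∧ trB ρ = X ∧ trA ρ = Y := by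
  have hX' : (X.trace⁻¹ • X).PosSemidef := hX.smul (inv_nonneg.mpr hX.trace_nonneg)
  refine ⟨(X.trace⁻¹ • X) ⊗ₖ Y, hX'.kronecker hY, .kronecker hX' hY, ?_, ?_⟩
  · rw [trB_kronecker, smul_smul, ← h, hX.trace_mul_inv_trace_smul]
  · rw [trA_kronecker, trace_smul, smul_eq_mul, h, mul_comm, hY.trace_mul_inv_trace_smul]

/-- Rule ExFalso: with zero preexpectation, any judgment holds, provided the
programs are trace-preserving (terminating) on positive semidefinite states. -/
theorem qRHL_exfalso {I J : Type*} [Fintype I] [Fintype J]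
    (E1 : Matrix I I ℂ → Matrix I I ℂ) (E2 : Matrix J J ℂ → Matrix J J ℂ)
    (hE1 : ∀ ρ : Matrix I I ℂ, ρ.PosSemidef →
      (E1 ρ).PosSemidef ∧ Matrix.trace (E1 ρ) = Matrix.trace ρ)
    (hE2 : ∀ σ : Matrix J J ℂ, σ.PosSemidef →
      (E2 σ).PosSemidef ∧ Matrix.trace (E2 σ) = Matrix.trace σ)
    (B : Matrix (I × J) (I × J) ℂ) (hB : B.PosSemidef) :
    qRHL 0 E1 E2 B := by
  intro ρ _ hρ
  obtain ⟨hX, hXtr⟩ := hE1 _ hρ.posSemidef_trB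
  obtain ⟨hY, hYtr⟩ := hE2 _ hρ.posSemidef_trA
  obtain ⟨ρ', hρ', hρ'sep, hρ'B, hρ'A⟩ :=
    exists_separable_of_trace_eq hX hY (by rw [hXtr, hYtr, trace_trB, trace_trA])
  refine ⟨ρ', hρ', hρ'sep, hρ'B, hρ'A, ?_⟩
  simpa using (Complex.nonneg_iff.mp (hB.trace_mul_nonneg hρ')).1
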